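/- Let K(f,h) := -2π ∫_{C₊} (conj f^μ(p)) h_μ(p) d³p/p₀ be the indefinite inner product on momentum-space test functions restricted to the forward light cone, and let p ⊂ X be the subspace of functions with p_μ f^μ(p) = 0 on C₊. Then K(f,f) ≥ 0 for all f ∈ p, and K(f,f) = 0 for f ∈ p if and only if f_μ(p) = p_μ h(p) on C₊ for some scalar function h (i.e. f lies in the gradient kernel p₀). -/

import Mathlib

open MeasureTheory

/-- Minkowski contraction `conj(f^μ(p)) g_μ(p) = conj f⁰ g⁰ − Σᵢ conj fⁱ gⁱ` of two
(contravariant) test functions on the light cone, parametrized by `𝐩 ∈ ℝ³`. -/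
noncomputable def mink (f g : EuclideanSpace ℝ (Fin 3) → Fin 4 → ℂ)
    (p : EuclideanSpace ℝ (Fin 3)) : ℂ :=
  starRingEnd ℂ (f p 0) * g p 0 - ∑ i : Fin 3, starRingEnd ℂ (f p i.succ) * g p i.succ

/-- Integrand of `K` with respect to the invariant measure `d³p / p₀` on `C₊`. -/
noncomputable def Kint (f g : EuclideanSpace ℝ (Fin 3) → Fin 4 → ℂ)
    (p : EuclideanSpace ℝ (Fin 3)) : ℂ :=
  mink f g p / (‖p‖ : ℂ)

/-- The indefinite inner product `K(f,g) = -2π ∫_{C₊} conj(f^μ) g_μ d³p/p₀`. -/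
noncomputable def Kform (f g : EuclideanSpace ℝ (Fin 3) → Fin 4 → ℂ) : ℂ :=
  (-2 * (Real.pi : ℂ)) * ∫ p : EuclideanSpace ℝ (Fin 3), Kint f g p
/-!
Transversality says `‖𝐩‖ f⁰ = ⟪𝐩, 𝐟⟫`, so Cauchy–Schwarz gives `|f⁰| ≤ ‖𝐟‖`: the integrand
`f^μ f_μ / p₀` of `K(f,f) / (-2π)` is real and nonpositive. If `K(f,f) = 0`, the continuous
function `f^μ f_μ` vanishes almost everywhere, hence everywhere, and the equality case of
Cauchy–Schwarz gives `𝐟(p) = (f⁰(p) / ‖𝐩‖) 𝐩` for `𝐩 ≠ 0`. At the origin, the limits of `𝐟`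
along the rays through `𝐮` and `-𝐮` differ by a sign, which forces `f(0) = 0`.
-/

open Set Complex

section CauchySchwarz

variable {𝕜 E : Type*} [RCLike 𝕜] [NormedAddCommGroup E] [InnerProductSpace 𝕜 E]

lemma norm_le_of_norm_mul_eq_inner {x y : E} {c : 𝕜} (hx : x ≠ 0)
    (h : (‖x‖ : 𝕜) * c = inner 𝕜 x y) : ‖c‖ ≤ ‖y‖ := by
  have hxpos : 0 < ‖x‖ := norm_pos_iff.mpr hx
  refine le_of_mul_le_mul_left ?_ hxpos
  calc ‖x‖ * ‖c‖ = ‖inner 𝕜 x y‖ := by rw [← h, norm_mul, RCLike.norm_ofReal, abs_norm]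
    _ ≤ ‖x‖ * ‖y‖ := norm_inner_le_norm x y

lemma eq_smul_of_norm_mul_eq_inner {x y : E} {c : 𝕜} (hx : x ≠ 0)
    (h : (‖x‖ : 𝕜) * c = inner 𝕜 x y) (hc : ‖c‖ = ‖y‖) : y = (c / ‖x‖) • x := by
  have hxK : (‖x‖ : 𝕜) ≠ 0 := RCLike.ofReal_ne_zero.mpr (norm_ne_zero_iff.mpr hx)
  have hnorm : ‖inner 𝕜 x y‖ = ‖x‖ * ‖y‖ := by
    rw [← h, norm_mul, RCLike.norm_ofReal, abs_norm, hc]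
  have hpar : y = (inner 𝕜 x y / inner 𝕜 x x) • x :=
    (((norm_inner_eq_norm_tfae 𝕜 x y).out 0 1 rfl rfl).mp hnorm).resolve_left hx
  rw [hpar, ← h, inner_self_eq_norm_sq_to_K]
  congr 1
  field_simp

end CauchySchwarz

section Complexify

variable {ι : Type*}

def complexify (p : EuclideanSpace ℝ ι) : EuclideanSpace ℂ ι :=
  WithLp.toLp 2 fun i => (p i : ℂ)

@[simp]
lemma complexify_apply (p : EuclideanSpace ℝ ι) (i : ι) : complexify p i = p i := rfl

@[simp]
lemma norm_complexify [Fintype ι] (p : EuclideanSpace ℝ ι) : ‖complexify p‖ = ‖p‖ := by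
  simp [EuclideanSpace.norm_eq, Complex.norm_real]

lemma complexify_ne_zero [Fintype ι] {p : EuclideanSpace ℝ ι} (hp : p ≠ 0) :
    complexify p ≠ 0 := by
  rw [← norm_ne_zero_iff, norm_complexify]
  exact norm_ne_zero_iff.mpr hp

lemma complexify_smul (t : ℝ) (p : EuclideanSpace ℝ ι) :
    complexify (t • p) = (t : ℂ) • complexify p := by
  ext i; simp

lemma inner_complexify_left [Fintype ι] (p : EuclideanSpace ℝ ι) (z : EuclideanSpace ℂ ι) :
    inner ℂ (complexify p) z = ∑ i, (p i : ℂ) * z i := by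
  simp [PiLp.inner_apply, mul_comm]

end Complexify

lemma eq_zero_of_eq_smul_complexify {ι : Type*} [Fintype ι] [Nonempty ι]
    {a : EuclideanSpace ℝ ι → ℂ} {F : EuclideanSpace ℝ ι → EuclideanSpace ℂ ι}
    (ha : Continuous a) (hF : Continuous F)
    (hpar : ∀ p ≠ 0, F p = (a p / ‖p‖) • complexify p) : a 0 = 0 ∧ F 0 = 0 := by
  have along_ray : ∀ u ≠ 0, F 0 = (a 0 / ‖u‖) • complexify u := by
    intro u hu
    have hEq : EqOn (fun t : ℝ => F (t • u)) (fun t => (a (t • u) / ‖u‖) • complexify u)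
        (Ioi 0) := by
      intro t (ht : 0 < t)
      have ht' : (t : ℂ) ≠ 0 := ofReal_ne_zero.mpr ht.ne'
      dsimp only
      rw [hpar _ (smul_ne_zero ht.ne' hu), complexify_smul, smul_smul, norm_smul,
        Real.norm_of_nonneg ht.le, ofReal_mul]
      congr 1
      field_simp
    simpa using hEq.closure (by fun_prop) (by fun_prop)
      (show (0 : ℝ) ∈ closure (Ioi 0) by simp)
  obtain ⟨u, hu⟩ := exists_ne (0 : EuclideanSpace ℝ ι)
  have hpos := along_ray u hu
  have hneg := along_ray (-u) (neg_ne_zero.mpr hu)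
  -- approaching the origin along `u` and along `-u` gives opposite limits
  have hc : a 0 / ‖u‖ = -(a 0 / ‖u‖) := by
    rw [norm_neg, show complexify (-u) = -complexify u by ext; simp, smul_neg, ← neg_smul]
      at hneg
    exact smul_left_injective ℂ (complexify_ne_zero hu) (hpos.symm.trans hneg)
  have hc0 : a 0 / ‖u‖ = 0 := self_eq_neg.mp hc
  refine ⟨?_, by rw [hpos, hc0, zero_smul]⟩
  simpa [hu] using hc0

lemma integral_div_norm_eq_zero_iff {E : Type*} [NormedAddCommGroup E] [MeasurableSpace E]
    {μ : Measure E} [μ.IsOpenPosMeasure] [NullSingletonClass μ] {g : E → ℝ} (hg : Continuous g)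
    (hnonpos : ∀ p, g p / ‖p‖ ≤ 0) (hint : Integrable (fun p => g p / ‖p‖) μ) :
    ∫ p, g p / ‖p‖ ∂μ = 0 ↔ g = 0 := by
  have hae : (fun p => g p / ‖p‖) =ᵐ[μ] 0 ↔ g =ᵐ[μ] 0 := by
    refine Filter.eventually_congr ((μ.ae_ne 0).mono fun p hp => ?_)
    simp [norm_ne_zero_iff.mpr hp]
  have hint0 := integral_eq_iff_of_ae_le hint (integrable_zero E ℝ μ)
    (Filter.Eventually.of_forall hnonpos)
  simp only [Pi.zero_apply, integral_zero] at hint0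
  rw [hint0, hae]
  exact hg.ae_eq_iff_eq μ continuous_zero

section Minkowski

variable (f : EuclideanSpace ℝ (Fin 3) → Fin 4 → ℂ)

noncomputable def spatialPart (p : EuclideanSpace ℝ (Fin 3)) : EuclideanSpace ℂ (Fin 3) :=
  WithLp.toLp 2 fun i => f p i.succ

@[simp]
lemma spatialPart_apply (p : EuclideanSpace ℝ (Fin 3)) (i : Fin 3) :
    spatialPart f p i = f p i.succ := rfl

noncomputable def minkSq (p : EuclideanSpace ℝ (Fin 3)) : ℝ := ‖f p 0‖ ^ 2 - ‖spatialPart f p‖ ^ 2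

lemma mink_self_eq (p : EuclideanSpace ℝ (Fin 3)) : mink f f p = minkSq f p := by
  simp [mink, minkSq, EuclideanSpace.norm_sq_eq, conj_mul']

variable {f}

lemma continuous_spatialPart (hf : Continuous f) : Continuous (spatialPart f) := by
  unfold spatialPart; fun_prop

lemma continuous_minkSq (hf : Continuous f) : Continuous (minkSq f) := by
  have := continuous_spatialPart hf
  unfold minkSq; fun_prop

section Transverse

variable {p : EuclideanSpace ℝ (Fin 3)}

lemma norm_mul_eq_inner_spatialPart
    (ht : (‖p‖ : ℂ) * f p 0 = ∑ i : Fin 3, (p i : ℂ) * f p i.succ) :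
    (‖complexify p‖ : ℂ) * f p 0 = inner ℂ (complexify p) (spatialPart f p) := by
  rw [norm_complexify, inner_complexify_left]
  exact ht

lemma minkSq_nonpos
    (ht : (‖p‖ : ℂ) * f p 0 = ∑ i : Fin 3, (p i : ℂ) * f p i.succ) (hp : p ≠ 0) :
    minkSq f p ≤ 0 := by
  have hle := norm_le_of_norm_mul_eq_inner (complexify_ne_zero hp)
    (norm_mul_eq_inner_spatialPart ht)
  unfold minkSq
  nlinarith [norm_nonneg (f p 0)]

lemma spatialPart_eq_smul_of_minkSq_eq_zero
    (ht : (‖p‖ : ℂ) * f p 0 = ∑ i : Fin 3, (p i : ℂ) * f p i.succ)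
    (hp : p ≠ 0) (h0 : minkSq f p = 0) :
    spatialPart f p = (f p 0 / ‖p‖) • complexify p := by
  have hnorm : ‖f p 0‖ = ‖spatialPart f p‖ :=
    (pow_left_inj₀ (norm_nonneg _) (norm_nonneg _) two_ne_zero).mp (sub_eq_zero.mp h0)
  simpa using eq_smul_of_norm_mul_eq_inner (complexify_ne_zero hp)
    (norm_mul_eq_inner_spatialPart ht) hnorm

end Transverse

lemma minkSq_div_norm_nonpos
    (htrans : ∀ p : EuclideanSpace ℝ (Fin 3),
      (‖p‖ : ℂ) * f p 0 = ∑ i : Fin 3, (p i : ℂ) * f p i.succ)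
    (p : EuclideanSpace ℝ (Fin 3)) : minkSq f p / ‖p‖ ≤ 0 := by
  rcases eq_or_ne p 0 with rfl | hp
  · simp -- division by `‖0‖ = 0` returns `0`
  · exact div_nonpos_of_nonpos_of_nonneg (minkSq_nonpos (htrans p) hp) (norm_nonneg p)

lemma minkSq_eq_zero_iff (hcont : Continuous f)
    (htrans : ∀ p : EuclideanSpace ℝ (Fin 3),
      (‖p‖ : ℂ) * f p 0 = ∑ i : Fin 3, (p i : ℂ) * f p i.succ) :
    minkSq f = 0 ↔ ∃ h : EuclideanSpace ℝ (Fin 3) → ℂ,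
        ∀ p : EuclideanSpace ℝ (Fin 3),
          f p 0 = (‖p‖ : ℂ) * h p ∧ ∀ i : Fin 3, f p i.succ = (p i : ℂ) * h p := by
  constructor
  · intro h0
    have hpar : ∀ p ≠ 0, spatialPart f p = (f p 0 / ‖p‖) • complexify p := fun p hp =>
      spatialPart_eq_smul_of_minkSq_eq_zero (htrans p) hp (congrFun h0 p)
    obtain ⟨hf00, hF0⟩ := eq_zero_of_eq_smul_complexify (by fun_prop)
      (continuous_spatialPart hcont) hpar
    refine ⟨fun p => f p 0 / ‖p‖, fun p => ?_⟩
    rcases eq_or_ne p 0 with rfl | hp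
    · refine ⟨by simp [hf00], fun i => ?_⟩
      simpa using congrArg (· i) hF0
    · have hp' : (‖p‖ : ℂ) ≠ 0 := ofReal_ne_zero.mpr (norm_ne_zero_iff.mpr hp)
      refine ⟨by field_simp, fun i => ?_⟩
      simpa [mul_comm] using congrArg (· i) (hpar p hp)
  · rintro ⟨h, hh⟩
    funext p
    obtain ⟨h0, hi⟩ := hh p
    have hF : spatialPart f p = h p • complexify p := by
      ext i; simp [hi, mul_comm]
    simp [minkSq, hF, h0, norm_smul, mul_pow, mul_comm]

end Minkowski

/-- Let `f` be (the light-cone restriction of) a test function satisfying the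
transversality condition `p_μ f^μ(p) = 0` on `C₊` (i.e. `‖𝐩‖ f⁰(p) = 𝐩 · 𝐟(p)`).  Then
`K(f,f) ≥ 0` (real and nonnegative), and `K(f,f) = 0` iff `f` is a gradient:
`f^μ(p) = p^μ h(p)` on `C₊` for some scalar function `h`. -/
theorem stmt_18 (f : EuclideanSpace ℝ (Fin 3) → Fin 4 → ℂ)
    (hcont : Continuous f)
    (hint : Integrable (Kint f f))
    (htrans : ∀ p : EuclideanSpace ℝ (Fin 3),
      (‖p‖ : ℂ) * f p 0 = ∑ i : Fin 3, (p i : ℂ) * f p i.succ) :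
    0 ≤ (Kform f f).re ∧ (Kform f f).im = 0 ∧
      (Kform f f = 0 ↔ ∃ h : EuclideanSpace ℝ (Fin 3) → ℂ,
        ∀ p : EuclideanSpace ℝ (Fin 3),
          f p 0 = (‖p‖ : ℂ) * h p ∧ ∀ i : Fin 3, f p i.succ = (p i : ℂ) * h p) := by
  set R : EuclideanSpace ℝ (Fin 3) → ℝ := fun p => minkSq f p / ‖p‖
  have hKint : Kint f f = fun p => (R p : ℂ) := by
    funext p; simp [Kint, R, mink_self_eq]
  have hKform : Kform f f = ((-2 * Real.pi * ∫ p, R p : ℝ) : ℂ) := by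
    simp only [Kform, hKint, integral_complex_ofReal]; push_cast; ring
  have hRint : Integrable R := by
    rw [hKint] at hint; simpa using hint.re
  have hR : ∀ p, R p ≤ 0 := minkSq_div_norm_nonpos htrans
  refine ⟨?_, by rw [hKform, ofReal_im], ?_⟩
  · rw [hKform, ofReal_re]
    exact mul_nonneg_of_nonpos_of_nonpos (by linarith [Real.pi_pos]) (integral_nonpos hR)
  · rw [← minkSq_eq_zero_iff hcont htrans,
      ← integral_div_norm_eq_zero_iff (continuous_minkSq hcont) hR hRint, hKform,
      ofReal_eq_zero, mul_eq_zero, or_iff_right (by simp [Real.pi_ne_zero])]
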